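/- arXiv:math/0406532 — 2 statements merged into one kernel-verified Lean document; each statement's English description precedes it below -/
import Mathlib

section
/- Let $\xi$ and $\eta$ be real random variables, and let $T, G$ be tail functions (i.e., nonincreasing, right-continuous functions with $T(0)=G(0)=1$, $T(\infty)=G(\infty)=0$) such that for all $x>0$, $\max(P(\xi>x),P(\xi<-x)) \le T(x)$ and $\max(P(\eta>x),P(\eta<-x)) \le G(x)$. Then for all $x>0$, $\max(P(\xi\eta>x),P(\xi\eta<-x)) \le \min(1,\,4\inf_{y>0}(T(y)+G(x/y)))$. -/
open MeasureTheory

/-- Tail of the distribution of a real random variable. -/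
noncomputable def tailD {Ω : Type*} [MeasurableSpace Ω] (μ : Measure Ω) (ξ : Ω → ℝ) (x : ℝ) : ℝ :=
  max (μ {ω | x < ξ ω}).toReal (μ {ω | ξ ω < -x}).toReal

lemma lt_abs_or_div_lt_abs_of_lt_abs_mul {a b x y : ℝ} (hy : 0 < y) (h : x < |a * b|) :
    y < |a| ∨ x / y < |b| := by
  by_contra! hab
  have : |a * b| ≤ y * (x / y) := by
    rw [abs_mul]
    exact mul_le_mul hab.1 hab.2 (abs_nonneg b) hy.le
  rw [mul_div_cancel₀ x hy.ne'] at this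
  linarith

lemma setOf_lt_abs_eq_union {Ω : Type*} (ξ : Ω → ℝ) (x : ℝ) :
    {ω | x < |ξ ω|} = {ω | x < ξ ω} ∪ {ω | ξ ω < -x} := by
  ext ω
  show x < |ξ ω| ↔ x < ξ ω ∨ ξ ω < -x
  rw [lt_abs, lt_neg]

section

variable {Ω : Type*} [MeasurableSpace Ω] (μ : Measure Ω) (ξ η : Ω → ℝ)

lemma tailD_nonneg (x : ℝ) : 0 ≤ tailD μ ξ x :=
  le_max_of_le_left ENNReal.toReal_nonneg

lemma tailD_le_one [IsProbabilityMeasure μ] (x : ℝ) : tailD μ ξ x ≤ 1 :=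
  max_le measureReal_le_one measureReal_le_one

lemma measureReal_lt_abs_le_two_mul_tailD (x : ℝ) :
    μ.real {ω | x < |ξ ω|} ≤ 2 * tailD μ ξ x := by
  calc μ.real {ω | x < |ξ ω|} ≤ μ.real {ω | x < ξ ω} + μ.real {ω | ξ ω < -x} := by
        rw [setOf_lt_abs_eq_union]; exact measureReal_union_le _ _
    _ ≤ 2 * max (μ.real {ω | x < ξ ω}) (μ.real {ω | ξ ω < -x}) := by
        linarith [le_max_left (μ.real {ω | x < ξ ω}) (μ.real {ω | ξ ω < -x}),
          le_max_right (μ.real {ω | x < ξ ω}) (μ.real {ω | ξ ω < -x})]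
    _ = 2 * tailD μ ξ x := rfl

variable [IsFiniteMeasure μ]

lemma tailD_le_measureReal_lt_abs (x : ℝ) : tailD μ ξ x ≤ μ.real {ω | x < |ξ ω|} := by
  rw [setOf_lt_abs_eq_union]
  exact max_le (measureReal_mono Set.subset_union_left) (measureReal_mono Set.subset_union_right)

/-- If `|ξ η| > x` then `|ξ| > y` or `|η| > x / y`; each of these events costs two one-sided
tails. -/
lemma tailD_mul_le {x y : ℝ} (hy : 0 < y) :
    tailD μ (fun ω => ξ ω * η ω) x ≤ 2 * (tailD μ ξ y + tailD μ η (x / y)) := by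
  have hsub : {ω | x < |ξ ω * η ω|} ⊆ {ω | y < |ξ ω|} ∪ {ω | x / y < |η ω|} :=
    fun ω h => lt_abs_or_div_lt_abs_of_lt_abs_mul hy h
  calc tailD μ (fun ω => ξ ω * η ω) x ≤ μ.real {ω | x < |ξ ω * η ω|} :=
        tailD_le_measureReal_lt_abs μ _ x
    _ ≤ μ.real {ω | y < |ξ ω|} + μ.real {ω | x / y < |η ω|} :=
        (measureReal_mono hsub).trans (measureReal_union_le _ _)
    _ ≤ 2 * tailD μ ξ y + 2 * tailD μ η (x / y) :=
        add_le_add (measureReal_lt_abs_le_two_mul_tailD μ ξ y)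
          (measureReal_lt_abs_le_two_mul_tailD μ η (x / y))
    _ = 2 * (tailD μ ξ y + tailD μ η (x / y)) := by ring

end

theorem stmt0_general {Ω : Type*} [MeasurableSpace Ω] (μ : Measure Ω) [IsProbabilityMeasure μ]
    (ξ η : Ω → ℝ) (T G : ℝ → ℝ)
    (hξ : ∀ x > 0, tailD μ ξ x ≤ T x)
    (hη : ∀ x > 0, tailD μ η x ≤ G x) :
    ∀ x > 0, tailD μ (fun ω => ξ ω * η ω) x ≤
      min 1 (4 * ⨅ y : Set.Ioi (0 : ℝ), (T y + G (x / y))) := by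
  intro x hx
  have hbound : ∀ y : Set.Ioi (0 : ℝ), tailD μ (fun ω => ξ ω * η ω) x ≤ 2 * (T y + G (x / y)) :=
    fun ⟨y, hy⟩ => (tailD_mul_le μ ξ η hy).trans
      (by gcongr; exacts [hξ y hy, hη (x / y) (div_pos hx hy)])
  have hinf : tailD μ (fun ω => ξ ω * η ω) x / 2 ≤ ⨅ y : Set.Ioi (0 : ℝ), (T y + G (x / y)) :=
    le_ciInf fun y => by linarith [hbound y]
  refine le_min (tailD_le_one μ _ x) ?_
  linarith [tailD_nonneg μ (fun ω => ξ ω * η ω) x]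

theorem stmt0 {Ω : Type*} [MeasurableSpace Ω] (μ : Measure Ω) [IsProbabilityMeasure μ]
    (ξ η : Ω → ℝ) (T G : ℝ → ℝ)
    (hTmono : Antitone T) (hGmono : Antitone G)
    (hTrc : ∀ x, ContinuousWithinAt T (Set.Ici x) x)
    (hGrc : ∀ x, ContinuousWithinAt G (Set.Ici x) x)
    (hT0 : T 0 = 1) (hG0 : G 0 = 1)
    (hTlim : Filter.Tendsto T Filter.atTop (nhds 0))
    (hGlim : Filter.Tendsto G Filter.atTop (nhds 0))
    (hξ : ∀ x > 0, tailD μ ξ x ≤ T x)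
    (hη : ∀ x > 0, tailD μ η x ≤ G x) :
    ∀ x > 0, tailD μ (fun ω => ξ ω * η ω) x ≤
      min 1 (4 * ⨅ y : Set.Ioi (0 : ℝ), (T y + G (x / y))) :=
  stmt0_general μ ξ η T G hξ hη
end

section
/- Let $\xi,\eta$ be random variables and $q_1,q_2,A,B>0$, $Y_1,Y_2\ge 1$ constants such that for all $x\ge 0$: $T(\xi,x)\le Y_1\exp(-(x/A)^{q_1})$ and $T(\eta,x)\le Y_2\exp(-(x/B)^{q_2})$. Then for all $x\ge 0$, $T(\xi\eta,x)\le 8\max(Y_1,Y_2)\exp\big(-(x/(AB))^{q_1 q_2/(q_1+q_2)}\big)$. -/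
open MeasureTheory ENNReal

theorem stmt1 {Ω : Type*} [MeasurableSpace Ω] (μ : Measure Ω) [IsProbabilityMeasure μ]
    (ξ η : Ω → ℝ) (q₁ q₂ A B Y₁ Y₂ : ℝ)
    (hq₁ : 0 < q₁) (hq₂ : 0 < q₂) (hA : 0 < A) (hB : 0 < B)
    (hY₁ : 1 ≤ Y₁) (hY₂ : 1 ≤ Y₂)
    (hξ : ∀ x ≥ 0, tailD μ ξ x ≤ Y₁ * Real.exp (-(x / A) ^ q₁))
    (hη : ∀ x ≥ 0, tailD μ η x ≤ Y₂ * Real.exp (-(x / B) ^ q₂)) :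
    ∀ x ≥ 0, tailD μ (fun ω => ξ ω * η ω) x ≤
      8 * max Y₁ Y₂ * Real.exp (-(x / (A * B)) ^ (q₁ * q₂ / (q₁ + q₂))) := by
  intro x hx
  have hM1 : (1:ℝ) ≤ max Y₁ Y₂ := le_trans hY₁ (le_max_left _ _)
  rcases eq_or_lt_of_le hx with hx0 | hx0
  · -- x = 0 case
    have hxe : x = 0 := hx0.symm
    subst hxe
    have hq : q₁ * q₂ / (q₁ + q₂) ≠ 0 := by positivity
    have hAB : (0:ℝ) / (A * B) = 0 := by simp
    rw [hAB, Real.zero_rpow hq]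
    simp only [neg_zero, Real.exp_zero, mul_one]
    have h1 : ∀ s : Set Ω, (μ s).toReal ≤ 1 := by
      intro s
      have := prob_le_one (μ := μ) (s := s)
      have : (μ s).toReal ≤ ((1:ℝ≥0∞)).toReal :=
        ENNReal.toReal_mono ENNReal.one_ne_top this
      simpa using this
    have : tailD μ (fun ω => ξ ω * η ω) 0 ≤ 1 := max_le (h1 _) (h1 _)
    nlinarith
  · -- x > 0 case
    set t := x / (A * B) with htdef
    have ht : 0 < t := div_pos hx0 (mul_pos hA hB)
    have hq12 : 0 < q₁ + q₂ := by linarith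
    set p₁ := q₂ / (q₁ + q₂) with hp1
    set p₂ := q₁ / (q₁ + q₂) with hp2
    set u := A * t ^ p₁ with hudef
    set v := B * t ^ p₂ with hvdef
    have hu0 : 0 < u := mul_pos hA (Real.rpow_pos_of_pos ht _)
    have hv0 : 0 < v := mul_pos hB (Real.rpow_pos_of_pos ht _)
    set r := t ^ (q₁ * q₂ / (q₁ + q₂)) with hrdef
    have huv : u * v = x := by
      rw [hudef, hvdef]
      have : t ^ p₁ * t ^ p₂ = t ^ (p₁ + p₂) := (Real.rpow_add ht _ _).symm
      have hp : p₁ + p₂ = 1 := by rw [hp1, hp2, ← add_div, add_comm q₂ q₁]; exact div_self hq12.ne'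
      rw [mul_mul_mul_comm, this, hp, Real.rpow_one, htdef]
      field_simp
    have huA : (u / A) ^ q₁ = r := by
      have h : u / A = t ^ p₁ := by rw [hudef]; field_simp
      rw [h, ← Real.rpow_mul ht.le]
      congr 1
      rw [hp1]; field_simp
    have hvB : (v / B) ^ q₂ = r := by
      have h : v / B = t ^ p₂ := by rw [hvdef]; field_simp
      rw [h, ← Real.rpow_mul ht.le]
      congr 1
      rw [hp2]; field_simp
    set c := max Y₁ Y₂ * Real.exp (-r) with hcdef
    have hc0 : 0 ≤ c := by positivity
    -- bounds for each one-sided tail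
    have hξ' := hξ u hu0.le
    have hη' := hη v hv0.le
    rw [huA] at hξ'
    rw [hvB] at hη'
    have hb1 : (μ {ω | u < ξ ω}).toReal ≤ c :=
      le_trans (le_trans (le_max_left _ _) hξ')
        (mul_le_mul_of_nonneg_right (le_max_left _ _) (Real.exp_nonneg _))
    have hb2 : (μ {ω | ξ ω < -u}).toReal ≤ c :=
      le_trans (le_trans (le_max_right _ _) hξ')
        (mul_le_mul_of_nonneg_right (le_max_left _ _) (Real.exp_nonneg _))
    have hb3 : (μ {ω | v < η ω}).toReal ≤ c :=
      le_trans (le_trans (le_max_left _ _) hη')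
        (mul_le_mul_of_nonneg_right (le_max_right _ _) (Real.exp_nonneg _))
    have hb4 : (μ {ω | η ω < -v}).toReal ≤ c :=
      le_trans (le_trans (le_max_right _ _) hη')
        (mul_le_mul_of_nonneg_right (le_max_right _ _) (Real.exp_nonneg _))
    -- the union set
    set U : Set Ω := ({ω | u < ξ ω} ∪ {ω | ξ ω < -u}) ∪ ({ω | v < η ω} ∪ {ω | η ω < -v})
      with hUdef
    have hUkey : ∀ ω : Ω, ω ∉ U → |ξ ω * η ω| ≤ x := by
      intro ω hω
      simp only [hUdef, Set.mem_union, Set.mem_setOf_eq, not_or, not_lt] at hω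
      obtain ⟨⟨h1, h2⟩, h3, h4⟩ := hω
      have hxi : |ξ ω| ≤ u := abs_le.2 ⟨h2, h1⟩
      have heta : |η ω| ≤ v := abs_le.2 ⟨h4, h3⟩
      calc |ξ ω * η ω| = |ξ ω| * |η ω| := abs_mul _ _
        _ ≤ u * v := mul_le_mul hxi heta (abs_nonneg _) hu0.le
        _ = x := huv
    have hUbound : (μ U).toReal ≤ 4 * c := by
      have hsum : μ U ≤ μ {ω | u < ξ ω} + μ {ω | ξ ω < -u} + μ {ω | v < η ω}
          + μ {ω | η ω < -v} := by
        calc μ U ≤ μ ({ω | u < ξ ω} ∪ {ω | ξ ω < -u}) + μ ({ω | v < η ω} ∪ {ω | η ω < -v}) :=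
              measure_union_le _ _
          _ ≤ (μ {ω | u < ξ ω} + μ {ω | ξ ω < -u}) + (μ {ω | v < η ω} + μ {ω | η ω < -v}) :=
              add_le_add (measure_union_le _ _) (measure_union_le _ _)
          _ = _ := by ring
      have hne : ∀ s : Set Ω, μ s ≠ ⊤ := fun s => (measure_lt_top μ s).ne
      have := ENNReal.toReal_mono (by
        simp [ENNReal.add_ne_top, hne]) hsum
      rw [ENNReal.toReal_add, ENNReal.toReal_add, ENNReal.toReal_add] at this
      · linarith
      all_goals simp [ENNReal.add_ne_top, hne]
    have hmono : ∀ s : Set Ω, s ⊆ U → (μ s).toReal ≤ 4 * c := by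
      intro s hs
      exact le_trans (ENNReal.toReal_mono (measure_lt_top μ U).ne (measure_mono hs)) hUbound
    have hfin : tailD μ (fun ω => ξ ω * η ω) x ≤ 4 * c := by
      apply max_le
      · apply hmono
        intro ω hω
        by_contra hc
        have := hUkey ω hc
        have : ξ ω * η ω ≤ x := le_trans (le_abs_self _) this
        exact absurd hω (by simpa using not_lt.2 this)
      · apply hmono
        intro ω hω
        by_contra hc
        have := hUkey ω hc
        have : -x ≤ ξ ω * η ω := by
          have := neg_abs_le (ξ ω * η ω)
          nlinarith [abs_nonneg (ξ ω * η ω)]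
        exact absurd hω (by simpa using not_lt.2 this)
    calc tailD μ (fun ω => ξ ω * η ω) x ≤ 4 * c := hfin
      _ ≤ 8 * max Y₁ Y₂ * Real.exp (-(x / (A * B)) ^ (q₁ * q₂ / (q₁ + q₂))) := by
          rw [hcdef, hrdef, htdef]
          nlinarith [Real.exp_nonneg (-(x / (A*B)) ^ (q₁ * q₂ / (q₁ + q₂))), hM1]
end
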